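/- Fix \alpha \in (0,1) and a real t with t > \alpha and t \ne 1, and for each n let m(n) = \lfloor \alpha n \rfloor. With r_1, r_2, r_3, r_{12} formed from a_n, b_n, c_n and a_{m(n)}, b_{m(n)}, c_{m(n)}, all evaluated at x = nt, one has (r_1^2 + r_2^2 - 2 r_{12}^2) / (n^{3/2} \, t \, r_3^2 \sqrt{(r_1+r_2)^2 - 4 r_{12}^2}) \to 0 as n \to \infty. -/

import Mathlib

open Filter

/-- `aa k x = ∑_{j=0}^k x^j / j!` -/
noncomputable def aa (k : ℕ) (x : ℝ) : ℝ := ∑ j ∈ Finset.range (k + 1), x ^ j / (Nat.factorial j)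

/-- `bb k x = ∑_{j=1}^k j x^j / j!` -/
noncomputable def bb (k : ℕ) (x : ℝ) : ℝ := ∑ j ∈ Finset.Icc 1 k, (j : ℝ) * x ^ j / (Nat.factorial j)

/-- `cc k x = ∑_{j=1}^k j² x^j / j!` -/
noncomputable def cc (k : ℕ) (x : ℝ) : ℝ := ∑ j ∈ Finset.Icc 1 k, (j : ℝ) ^ 2 * x ^ j / (Nat.factorial j)

noncomputable def r3 (n m : ℕ) (x : ℝ) : ℝ := aa n x + aa m x
noncomputable def r12 (n m : ℕ) (x : ℝ) : ℝ := bb n x * bb m x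
noncomputable def r1 (n m : ℕ) (x : ℝ) : ℝ := r3 n m x * cc n x - (bb n x) ^ 2
noncomputable def r2 (n m : ℕ) (x : ℝ) : ℝ := r3 n m x * cc m x - (bb m x) ^ 2

/-- The first-intensity (Kac–Rice) integrand of a Weyl random harmonic polynomial of
bidegree `(n, m)`, evaluated at `z`, with `x = |z|²`. -/
noncomputable def F (n m : ℕ) (z : ℂ) : ℝ :=
  (1 / ‖z‖ ^ 2) *
    (((r1 n m (‖z‖ ^ 2)) ^ 2 + (r2 n m (‖z‖ ^ 2)) ^ 2 - 2 * (r12 n m (‖z‖ ^ 2)) ^ 2) /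
      ((r3 n m (‖z‖ ^ 2)) ^ 2 *
        Real.sqrt ((r1 n m (‖z‖ ^ 2) + r2 n m (‖z‖ ^ 2)) ^ 2 - 4 * (r12 n m (‖z‖ ^ 2)) ^ 2)))

/-- The expected number of zeros in `ℂ`, as given by the Kac–Rice formula. -/
noncomputable def I (n m : ℕ) : ℝ := (1 / Real.pi) * ∫ z : ℂ, F n m z

/-!
Write `x = n t` and `m = ⌊α n⌋`. Since `r₁₂² ≤ r₁ r₂` (Cauchy–Schwarz), the numerator is at most
`S = (r₁ + r₂)² - 4 r₁₂²` and `√S ≤ r₁ + r₂`, so the ratio is at most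
`(r₁ + r₂) / (n^{3/2} t a_n²)`. Apart from terms carrying a factor `a_m`, `r₁ + r₂` is
`a_n c_n - b_n²`, i.e. `a_n²` times the variance of the Poisson law of mean `x` truncated at `n`.
That variance is `O(n)`: compare with the mean `x` when `t ≤ 1`, and with the top index `n` when
`t > 1`, where the weights decay geometrically downwards from `j = n`. The terms with `a_m` are
exponentially small relative to `a_n²`: consecutive weights `x^j / j!` grow by the factor `x / j`,
which stays above a constant `> 1` on a stretch of indices of length linear in `n` between `m` and
`min x n`. Hence the ratio is `O(n^{-1/2})`.
-/

open Topology Finset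
open scoped Nat

lemma sum_Icc_one_eq_sum_range {M : Type*} [AddCommMonoid M] (f : ℕ → M) (hf : f 0 = 0)
    (k : ℕ) : ∑ j ∈ Icc 1 k, f j = ∑ j ∈ range (k + 1), f j := by
  refine sum_subset (fun j hj => ?_) (fun j hj hj' => ?_)
  · simp only [mem_Icc] at hj; simp only [mem_range]; omega
  · obtain rfl : j = 0 := by simp only [mem_range, mem_Icc] at hj hj'; omega
    exact hf

lemma bb_eq_sum_range (k : ℕ) (x : ℝ) :
    bb k x = ∑ j ∈ range (k + 1), (j : ℝ) * x ^ j / j ! :=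
  sum_Icc_one_eq_sum_range _ (by simp) k

lemma cc_eq_sum_range (k : ℕ) (x : ℝ) :
    cc k x = ∑ j ∈ range (k + 1), (j : ℝ) ^ 2 * x ^ j / j ! :=
  sum_Icc_one_eq_sum_range _ (by simp) k

lemma Nat.factorial_le_factorial_sub_mul_pow {n k : ℕ} (hk : k ≤ n) : n ! ≤ (n - k)! * n ^ k := by
  rw [← Nat.factorial_mul_descFactorial hk]
  exact Nat.mul_le_mul_left _ (Nat.descFactorial_le_pow n k)

lemma pow_sub_div_factorial_le {x : ℝ} (hx : 0 < x) {n k : ℕ} (hk : k ≤ n) :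
    x ^ (n - k) / (n - k)! ≤ x ^ n / n ! * ((n : ℝ) / x) ^ k := by
  have hfac : (n ! : ℝ) ≤ (n - k)! * (n : ℝ) ^ k := by
    exact_mod_cast Nat.factorial_le_factorial_sub_mul_pow hk
  rw [div_pow, ← pow_sub_mul_pow x hk, div_mul_div_comm,
    div_le_div_iff₀ (by positivity) (by positivity)]
  calc x ^ (n - k) * (n ! * x ^ k) = x ^ (n - k) * x ^ k * n ! := by ring
    _ ≤ x ^ (n - k) * x ^ k * ((n - k)! * (n : ℝ) ^ k) :=
        mul_le_mul_of_nonneg_left hfac (by positivity)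
    _ = _ := by ring

lemma pow_div_factorial_le_of_le {x : ℝ} (hx : 0 < x) {j k : ℕ} (hjk : j ≤ k) (hkx : (k : ℝ) ≤ x) :
    x ^ j / j ! ≤ x ^ k / k ! := by
  have h := pow_sub_div_factorial_le hx (Nat.sub_le k j)
  rw [Nat.sub_sub_self hjk] at h
  refine h.trans (mul_le_of_le_one_right (by positivity) (pow_le_one₀ (by positivity) ?_))
  exact (div_le_one hx).2 hkx

section Moments

variable {x : ℝ}

lemma pow_div_factorial_le_aa (hx : 0 ≤ x) {j k : ℕ} (hjk : j ≤ k) : x ^ j / j ! ≤ aa k x :=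
  single_le_sum (f := fun j => x ^ j / j !) (fun _ _ => by positivity)
    (mem_range.2 (Nat.lt_succ_of_le hjk))

lemma one_le_aa (hx : 0 ≤ x) (k : ℕ) : 1 ≤ aa k x := by
  simpa using pow_div_factorial_le_aa hx (Nat.zero_le k)

lemma aa_nonneg (hx : 0 ≤ x) (k : ℕ) : 0 ≤ aa k x := zero_le_one.trans (one_le_aa hx k)

lemma cc_nonneg (hx : 0 ≤ x) (k : ℕ) : 0 ≤ cc k x := sum_nonneg fun _ _ => by positivity

lemma cc_mono (hx : 0 ≤ x) {m n : ℕ} (h : m ≤ n) : cc m x ≤ cc n x :=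
  sum_le_sum_of_subset_of_nonneg (Icc_subset_Icc le_rfl h) fun _ _ _ => by positivity

lemma cc_le_sq_mul_aa (hx : 0 ≤ x) (k : ℕ) : cc k x ≤ (k : ℝ) ^ 2 * aa k x := by
  rw [cc_eq_sum_range, aa, mul_sum]
  refine sum_le_sum fun j hj => ?_
  have hjk : (j : ℝ) ≤ k := by exact_mod_cast Nat.lt_succ_iff.1 (mem_range.1 hj)
  rw [mul_div_assoc]
  gcongr

lemma bb_sq_le_aa_mul_cc (hx : 0 ≤ x) (k : ℕ) : bb k x ^ 2 ≤ aa k x * cc k x := by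
  rw [bb_eq_sum_range, cc_eq_sum_range, aa]
  exact sum_sq_le_sum_mul_sum_of_sq_le_mul _ (fun _ _ => by positivity)
    (fun _ _ => by positivity) fun j _ => le_of_eq (by ring)

lemma sum_sub_sq_mul_eq (k : ℕ) (x θ : ℝ) :
    ∑ j ∈ range (k + 1), ((j : ℝ) - θ) ^ 2 * (x ^ j / j !)
      = cc k x - 2 * θ * bb k x + θ ^ 2 * aa k x := by
  rw [bb_eq_sum_range, cc_eq_sum_range, aa, mul_sum, mul_sum, ← sum_sub_distrib,
    ← sum_add_distrib]
  refine sum_congr rfl fun j _ => ?_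
  ring

lemma aa_mul_cc_sub_bb_sq_le (k : ℕ) (x θ : ℝ) :
    aa k x * cc k x - bb k x ^ 2
      ≤ aa k x * ∑ j ∈ range (k + 1), ((j : ℝ) - θ) ^ 2 * (x ^ j / j !) := by
  rw [sum_sub_sq_mul_eq]
  nlinarith [sq_nonneg (bb k x - θ * aa k x)]

end Moments

section Variance

variable {x : ℝ}

lemma aa_succ (n : ℕ) (x : ℝ) : aa (n + 1) x = aa n x + x ^ (n + 1) / (n + 1)! :=
  sum_range_succ _ _

lemma sum_sub_self_sq_mul_eq (n : ℕ) (x : ℝ) :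
    ∑ j ∈ range (n + 1), ((j : ℝ) - x) ^ 2 * (x ^ j / j !)
      = x * aa n x + x ^ n / n ! * (x * (x - 1 - n)) := by
  induction n with
  | zero =>
    simp only [aa, zero_add, sum_range_one, Nat.cast_zero, pow_zero, Nat.factorial_zero,
      Nat.cast_one]
    ring
  | succ n ih =>
    rw [sum_range_succ, ih, aa_succ, Nat.factorial_succ]
    push_cast
    field_simp
    ring

lemma aa_mul_cc_sub_bb_sq_le_of_le (hx : 0 ≤ x) {n : ℕ} (hxn : x ≤ n) :
    aa n x * cc n x - bb n x ^ 2 ≤ x * aa n x ^ 2 := by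
  have hvar := aa_mul_cc_sub_bb_sq_le n x x
  rw [sum_sub_self_sq_mul_eq] at hvar
  have htop : x ^ n / n ! * (x * (x - 1 - n)) ≤ 0 :=
    mul_nonpos_of_nonneg_of_nonpos (by positivity) (mul_nonpos_of_nonneg_of_nonpos hx (by linarith))
  nlinarith [aa_nonneg hx n]

/-- Reflecting `j ↦ n - j` turns the sum into one dominated by the geometric series in `n / x`. -/
lemma sum_sub_sq_mul_le_of_div_le (hx : 0 < x) (n : ℕ) {ρ : ℝ} (hρ1 : ρ < 1)
    (hρ : (n : ℝ) / x ≤ ρ) :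
    ∑ j ∈ range (n + 1), ((j : ℝ) - n) ^ 2 * (x ^ j / j !)
      ≤ (∑' k : ℕ, (k : ℝ) ^ 2 * ρ ^ k) * aa n x := by
  have hρ0 : 0 ≤ ρ := (by positivity : (0 : ℝ) ≤ n / x).trans hρ
  have hsum : Summable fun k : ℕ => (k : ℝ) ^ 2 * ρ ^ k :=
    summable_pow_mul_geometric_of_norm_lt_one 2 (by rwa [Real.norm_of_nonneg hρ0])
  rw [← sum_range_reflect]
  have hterm : ∀ k ∈ range (n + 1),
      (((n + 1 - 1 - k : ℕ) : ℝ) - n) ^ 2 * (x ^ (n + 1 - 1 - k) / (n + 1 - 1 - k)!)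
        ≤ (k : ℝ) ^ 2 * ρ ^ k * (x ^ n / n !) := by
    intro k hk
    have hkn : k ≤ n := Nat.lt_succ_iff.1 (mem_range.1 hk)
    rw [Nat.add_sub_cancel, Nat.cast_sub hkn, sub_sub_cancel_left, neg_sq]
    calc (k : ℝ) ^ 2 * (x ^ (n - k) / (n - k)!)
        ≤ (k : ℝ) ^ 2 * (x ^ n / n ! * ((n : ℝ) / x) ^ k) := by
          gcongr; exact pow_sub_div_factorial_le hx hkn
      _ ≤ (k : ℝ) ^ 2 * (x ^ n / n ! * ρ ^ k) := by gcongr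
      _ = (k : ℝ) ^ 2 * ρ ^ k * (x ^ n / n !) := by ring
  calc _ ≤ ∑ k ∈ range (n + 1), (k : ℝ) ^ 2 * ρ ^ k * (x ^ n / n !) := sum_le_sum hterm
    _ = (∑ k ∈ range (n + 1), (k : ℝ) ^ 2 * ρ ^ k) * (x ^ n / n !) := by rw [sum_mul]
    _ ≤ (∑' k : ℕ, (k : ℝ) ^ 2 * ρ ^ k) * aa n x := by
        gcongr
        · exact hsum.sum_le_tsum _ fun k _ => by positivity
        · exact pow_div_factorial_le_aa hx.le le_rfl

lemma aa_mul_cc_sub_bb_sq_le_of_div_le (hx : 0 < x) (n : ℕ) {ρ : ℝ} (hρ1 : ρ < 1)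
    (hρ : (n : ℝ) / x ≤ ρ) :
    aa n x * cc n x - bb n x ^ 2 ≤ (∑' k : ℕ, (k : ℝ) ^ 2 * ρ ^ k) * aa n x ^ 2 := by
  calc _ ≤ aa n x * ((∑' k : ℕ, (k : ℝ) ^ 2 * ρ ^ k) * aa n x) :=
        (aa_mul_cc_sub_bb_sq_le n x n).trans
          (mul_le_mul_of_nonneg_left (sum_sub_sq_mul_le_of_div_le hx n hρ1 hρ) (aa_nonneg hx.le n))
    _ = _ := by ring

lemma exists_aa_mul_cc_sub_bb_sq_le {t : ℝ} (ht : 0 < t) :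
    ∃ C : ℝ, ∀ᶠ n : ℕ in atTop,
      aa n (n * t) * cc n (n * t) - bb n (n * t) ^ 2 ≤ C * n * aa n (n * t) ^ 2 := by
  rcases le_or_gt t 1 with ht1 | ht1
  · refine ⟨t, Eventually.of_forall fun n => ?_⟩
    calc _ ≤ n * t * aa n (n * t) ^ 2 :=
          aa_mul_cc_sub_bb_sq_le_of_le (by positivity) (mul_le_of_le_one_right n.cast_nonneg ht1)
      _ = _ := by ring
  · refine ⟨∑' k : ℕ, (k : ℝ) ^ 2 * (1 / t) ^ k, ?_⟩
    filter_upwards [eventually_ge_atTop 1] with n hn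
    have hn : (1 : ℝ) ≤ n := by exact_mod_cast hn
    have hvar := aa_mul_cc_sub_bb_sq_le_of_div_le (x := n * t) (by positivity) n
      ((div_lt_one ht).2 ht1) (by rw [div_mul_cancel_left₀ (by positivity), one_div])
    refine hvar.trans (le_of_sub_nonneg ?_)
    have hC : 0 ≤ ∑' k : ℕ, (k : ℝ) ^ 2 * (1 / t) ^ k := tsum_nonneg fun k => by positivity
    calc (0 : ℝ) ≤ (n - 1) * ((∑' k : ℕ, (k : ℝ) ^ 2 * (1 / t) ^ k) * aa n (n * t) ^ 2) := by
          have := sub_nonneg.2 hn; positivity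
      _ = _ := by ring

end Variance

lemma div_mul_sqrt_le {R₁ R₂ R₁₂ D : ℝ} (h₁ : 0 ≤ R₁) (h₂ : 0 ≤ R₂) (h₁₂ : R₁₂ ^ 2 ≤ R₁ * R₂)
    (hD : 0 < D) :
    (R₁ ^ 2 + R₂ ^ 2 - 2 * R₁₂ ^ 2) / (D * √((R₁ + R₂) ^ 2 - 4 * R₁₂ ^ 2)) ≤ (R₁ + R₂) / D := by
  set S := (R₁ + R₂) ^ 2 - 4 * R₁₂ ^ 2
  have hS : 0 ≤ S := by nlinarith [sq_nonneg (R₁ - R₂)]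
  have hSle : √S ≤ R₁ + R₂ := Real.sqrt_le_iff.2 ⟨by positivity, by nlinarith⟩
  refine div_le_of_le_mul₀ (by positivity) (by positivity) ?_
  calc R₁ ^ 2 + R₂ ^ 2 - 2 * R₁₂ ^ 2 ≤ S := by linarith
    _ = √S * √S := (Real.mul_self_sqrt hS).symm
    _ ≤ (R₁ + R₂) * √S := by gcongr
    _ = (R₁ + R₂) / D * (D * √S) := by field_simp

lemma div_mul_sqrt_nonneg {R₁ R₂ R₁₂ D : ℝ} (h₁₂ : R₁₂ ^ 2 ≤ R₁ * R₂) (hD : 0 ≤ D) :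
    0 ≤ (R₁ ^ 2 + R₂ ^ 2 - 2 * R₁₂ ^ 2) / (D * √((R₁ + R₂) ^ 2 - 4 * R₁₂ ^ 2)) :=
  div_nonneg (by nlinarith [sq_nonneg (R₁ - R₂)]) (by positivity)

section Weyl

variable {x : ℝ}

lemma aa_mul_cc_le_r1 (hx : 0 ≤ x) (n m : ℕ) : aa m x * cc n x ≤ r1 n m x := by
  have := bb_sq_le_aa_mul_cc hx n
  rw [r1, r3]; linarith

lemma aa_mul_cc_le_r2 (hx : 0 ≤ x) (n m : ℕ) : aa n x * cc m x ≤ r2 n m x := by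
  have := bb_sq_le_aa_mul_cc hx m
  rw [r2, r3]; linarith

lemma r1_nonneg (hx : 0 ≤ x) (n m : ℕ) : 0 ≤ r1 n m x :=
  (mul_nonneg (aa_nonneg hx m) (cc_nonneg hx n)).trans (aa_mul_cc_le_r1 hx n m)

lemma r2_nonneg (hx : 0 ≤ x) (n m : ℕ) : 0 ≤ r2 n m x :=
  (mul_nonneg (aa_nonneg hx n) (cc_nonneg hx m)).trans (aa_mul_cc_le_r2 hx n m)

lemma r12_sq_le_r1_mul_r2 (hx : 0 ≤ x) (n m : ℕ) :
    r12 n m x ^ 2 ≤ r1 n m x * r2 n m x :=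
  calc r12 n m x ^ 2 = bb n x ^ 2 * bb m x ^ 2 := by rw [r12, mul_pow]
    _ ≤ (aa n x * cc n x) * (aa m x * cc m x) :=
        mul_le_mul (bb_sq_le_aa_mul_cc hx n) (bb_sq_le_aa_mul_cc hx m) (sq_nonneg _)
          (mul_nonneg (aa_nonneg hx n) (cc_nonneg hx n))
    _ = (aa m x * cc n x) * (aa n x * cc m x) := by ring
    _ ≤ r1 n m x * r2 n m x := by
        gcongr
        · exact mul_nonneg (aa_nonneg hx n) (cc_nonneg hx m)
        · exact r1_nonneg hx n m
        · exact aa_mul_cc_le_r1 hx n m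
        · exact aa_mul_cc_le_r2 hx n m

lemma r1_add_r2_le (hx : 0 ≤ x) (n m : ℕ) (hmn : m ≤ n) :
    r1 n m x + r2 n m x
      ≤ (aa n x * cc n x - bb n x ^ 2) + 3 * n ^ 2 * (aa m x * aa n x) := by
  have hcn := cc_le_sq_mul_aa hx n
  have hcm : cc m x ≤ n ^ 2 * aa m x :=
    (cc_le_sq_mul_aa hx m).trans
      (mul_le_mul_of_nonneg_right (by gcongr) (aa_nonneg hx m))
  have hcmn := cc_mono hx hmn
  have := mul_le_mul_of_nonneg_left hcn (aa_nonneg hx m)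
  have := mul_le_mul_of_nonneg_left hcm (aa_nonneg hx n)
  have := mul_le_mul_of_nonneg_left hcmn (aa_nonneg hx m)
  rw [r1, r2, r3]
  nlinarith [sq_nonneg (bb m x)]

end Weyl

section Tail

variable {x : ℝ}

lemma aa_le_mul_pow_div_factorial (hx : 0 < x) {m : ℕ} (hmx : (m : ℝ) ≤ x) :
    aa m x ≤ (m + 1) * (x ^ m / m !) := by
  calc aa m x ≤ ∑ _j ∈ range (m + 1), x ^ m / m ! :=
        sum_le_sum fun j hj =>
          pow_div_factorial_le_of_le hx (Nat.lt_succ_iff.1 (mem_range.1 hj)) hmx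
    _ = (m + 1) * (x ^ m / m !) := by simp

lemma aa_le_mul_pow_mul_aa (hx : 0 < x) {m K n : ℕ} (hmK : m ≤ K) (hKn : K ≤ n)
    (hKx : (K : ℝ) ≤ x) {ρ : ℝ} (hρ : (K : ℝ) / x ≤ ρ) :
    aa m x ≤ (m + 1) * ρ ^ (K - m) * aa n x := by
  have hstep := pow_sub_div_factorial_le hx (Nat.sub_le K m)
  rw [Nat.sub_sub_self hmK] at hstep
  calc aa m x ≤ (m + 1) * (x ^ m / m !) :=
        aa_le_mul_pow_div_factorial hx ((Nat.cast_le.2 hmK).trans hKx)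
    _ ≤ (m + 1) * (aa n x * ρ ^ (K - m)) := by
        gcongr
        exact hstep.trans (mul_le_mul (pow_div_factorial_le_aa hx.le hKn)
          (pow_le_pow_left₀ (by positivity) hρ _) (by positivity) (aa_nonneg hx.le n))
    _ = (m + 1) * ρ ^ (K - m) * aa n x := by ring

end Tail

/-- With `α < s < min t 1` and `K = ⌊s n⌋`, the gap `K - ⌊α n⌋ ≥ (s - α) n - 1` grows linearly,
so `aa_le_mul_pow_mul_aa` with `ρ = s / t` gives a geometric decay `(ρ ^ (s - α)) ^ n`. -/
lemma tendsto_mul_aa_floor_div_aa {α t : ℝ} (hα0 : 0 < α) (hα1 : α < 1) (htα : α < t) :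
    Tendsto (fun n : ℕ => n * aa ⌊α * n⌋₊ (n * t) / aa n (n * t)) atTop (𝓝 0) := by
  have ht : 0 < t := hα0.trans htα
  obtain ⟨s, hαs, hs⟩ := exists_between (lt_min htα hα1)
  have hst : s < t := hs.trans_le (min_le_left t 1)
  have hs1 : s < 1 := hs.trans_le (min_le_right t 1)
  set ρ := s / t
  have hρ0 : 0 < ρ := div_pos (hα0.trans hαs) ht
  have hρ1 : ρ < 1 := (div_lt_one ht).2 hst
  set q := ρ ^ (s - α)
  have hq0 : 0 < q := Real.rpow_pos_of_pos hρ0 _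
  have hq1 : q < 1 := Real.rpow_lt_one hρ0.le hρ1 (sub_pos.2 hαs)
  have hbound : ∀ n : ℕ,
      n * aa ⌊α * n⌋₊ (n * t) / aa n (n * t) ≤ ρ⁻¹ * (n ^ 2 * q ^ n + n ^ 1 * q ^ n) := by
    intro n
    rcases Nat.eq_zero_or_pos n with rfl | hn
    · simp
    have hn' : (0 : ℝ) < n := Nat.cast_pos.2 hn
    have hx : 0 < (n : ℝ) * t := by positivity
    set m := ⌊α * n⌋₊
    set K := ⌊s * n⌋₊
    have hmK : m ≤ K := Nat.floor_le_floor (by gcongr)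
    have hKn : K ≤ n := Nat.floor_le_of_le (mul_le_of_le_one_left hn'.le hs1.le)
    have hmn : (m : ℝ) ≤ n := Nat.cast_le.2 (hmK.trans hKn)
    have hs0 : 0 < s := hα0.trans hαs
    have hK : (K : ℝ) ≤ s * n := Nat.floor_le (by positivity)
    have hKx : (K : ℝ) ≤ n * t := hK.trans (by rw [mul_comm]; gcongr)
    have hKρ : (K : ℝ) / (n * t) ≤ ρ := by
      rw [div_le_iff₀ hx]
      calc (K : ℝ) ≤ s * n := hK
        _ = ρ * (n * t) := by simp only [ρ]; field_simp
    have hgap : (s - α) * n - 1 ≤ ((K - m : ℕ) : ℝ) := by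
      rw [Nat.cast_sub hmK]
      have := Nat.lt_floor_add_one (s * n)
      have := Nat.floor_le (by positivity : 0 ≤ α * n)
      linarith
    have hdecay : ρ ^ (K - m) ≤ ρ⁻¹ * q ^ n := by
      rw [← Real.rpow_natCast, ← Real.rpow_natCast, ← Real.rpow_mul hρ0.le, ← Real.rpow_neg_one,
        ← Real.rpow_add hρ0]
      exact Real.rpow_le_rpow_of_exponent_ge hρ0 hρ1.le (by linarith)
    have hA := one_le_aa hx.le n
    rw [div_le_iff₀ (by linarith)]
    calc (n : ℝ) * aa m (n * t) ≤ n * ((m + 1) * ρ ^ (K - m) * aa n (n * t)) := by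
          gcongr; exact aa_le_mul_pow_mul_aa hx hmK hKn hKx hKρ
      _ ≤ n * ((n + 1) * (ρ⁻¹ * q ^ n) * aa n (n * t)) := by gcongr
      _ = ρ⁻¹ * (n ^ 2 * q ^ n + n ^ 1 * q ^ n) * aa n (n * t) := by ring
  refine squeeze_zero (fun n => div_nonneg (mul_nonneg n.cast_nonneg (aa_nonneg (by positivity) _))
    (aa_nonneg (by positivity) _)) hbound ?_
  simpa using ((tendsto_pow_const_mul_const_pow_of_lt_one 2 hq0.le hq1).add
    (tendsto_pow_const_mul_const_pow_of_lt_one 1 hq0.le hq1)).const_mul ρ⁻¹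

lemma weyl_ratio_le_of_variance_le {x t C : ℝ} (hx : 0 ≤ x) (ht : 0 < t) {n m : ℕ} (hn : 0 < n)
    (hmn : m ≤ n) (hvar : aa n x * cc n x - bb n x ^ 2 ≤ C * n * aa n x ^ 2) :
    (r1 n m x ^ 2 + r2 n m x ^ 2 - 2 * r12 n m x ^ 2) /
        ((n : ℝ) ^ ((3 : ℝ) / 2) * t * r3 n m x ^ 2 *
          √((r1 n m x + r2 n m x) ^ 2 - 4 * r12 n m x ^ 2))
      ≤ ((n : ℝ) ^ ((1 : ℝ) / 2))⁻¹ * (C + 3 * (n * aa m x / aa n x)) / t := by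
  have hn' : (0 : ℝ) < n := Nat.cast_pos.2 hn
  have hA : 1 ≤ aa n x := one_le_aa hx n
  have hAr3 : aa n x ≤ r3 n m x := le_add_of_nonneg_right (aa_nonneg hx m)
  have hr3 : 0 < r3 n m x := by linarith
  have hr := add_nonneg (r1_nonneg hx n m) (r2_nonneg hx n m)
  have hpow : (n : ℝ) ^ ((3 : ℝ) / 2) = (n : ℝ) ^ ((1 : ℝ) / 2) * n := by
    rw [← Real.rpow_add_one hn'.ne']; norm_num
  calc _ ≤ (r1 n m x + r2 n m x) / ((n : ℝ) ^ ((3 : ℝ) / 2) * t * r3 n m x ^ 2) :=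
        div_mul_sqrt_le (r1_nonneg hx n m) (r2_nonneg hx n m) (r12_sq_le_r1_mul_r2 hx n m)
          (by positivity)
    _ ≤ (r1 n m x + r2 n m x) / ((n : ℝ) ^ ((3 : ℝ) / 2) * t * aa n x ^ 2) := by
        gcongr
    _ ≤ (C * n * aa n x ^ 2 + 3 * n ^ 2 * (aa m x * aa n x)) /
          ((n : ℝ) ^ ((3 : ℝ) / 2) * t * aa n x ^ 2) :=
        div_le_div_of_nonneg_right (by linarith [r1_add_r2_le hx n m hmn]) (by positivity)
    _ = _ := by
        rw [hpow]
        field_simp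

theorem weyl_pointwise_scaled_above_general (α t : ℝ) (hα0 : 0 < α) (hα1 : α < 1)
    (htα : α < t) :
    Tendsto
      (fun n : ℕ =>
        ((r1 n ⌊α * n⌋₊ (n * t)) ^ 2 + (r2 n ⌊α * n⌋₊ (n * t)) ^ 2
            - 2 * (r12 n ⌊α * n⌋₊ (n * t)) ^ 2) /
          ((n : ℝ) ^ ((3 : ℝ) / 2) * t * (r3 n ⌊α * n⌋₊ (n * t)) ^ 2 *
            Real.sqrt ((r1 n ⌊α * n⌋₊ (n * t) + r2 n ⌊α * n⌋₊ (n * t)) ^ 2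
              - 4 * (r12 n ⌊α * n⌋₊ (n * t)) ^ 2)))
      atTop (nhds 0) := by
  have ht : 0 < t := hα0.trans htα
  obtain ⟨C, hC⟩ := exists_aa_mul_cc_sub_bb_sq_le ht
  have hlim : Tendsto (fun n : ℕ => ((n : ℝ) ^ ((1 : ℝ) / 2))⁻¹ *
      (C + 3 * (n * aa ⌊α * n⌋₊ (n * t) / aa n (n * t))) / t) atTop (𝓝 0) := by
    simpa using (((tendsto_rpow_atTop (by norm_num : (0 : ℝ) < 1 / 2)).comp
      tendsto_natCast_atTop_atTop).inv_tendsto_atTop.mul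
        (((tendsto_mul_aa_floor_div_aa hα0 hα1 htα).const_mul 3).const_add C)).div_const t
  refine squeeze_zero' (Eventually.of_forall fun n =>
    div_mul_sqrt_nonneg (r12_sq_le_r1_mul_r2 (by positivity) _ _) (by positivity)) ?_ hlim
  filter_upwards [hC, eventually_gt_atTop 0] with n hCn hn
  exact weyl_ratio_le_of_variance_le (by positivity) ht hn
    (Nat.floor_le_of_le (mul_le_of_le_one_left n.cast_nonneg hα1.le)) hCn

/-- For `α ∈ (0,1)`, `t > α` with `t ≠ 1`, and `m(n) = ⌊α n⌋`, the rescaled first intensity,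
evaluated at `x = n t`, converges to `0` as `n → ∞`. -/
theorem weyl_pointwise_scaled_above (α t : ℝ) (hα0 : 0 < α) (hα1 : α < 1)
    (htα : α < t) (ht1 : t ≠ 1) :
    Tendsto
      (fun n : ℕ =>
        ((r1 n ⌊α * n⌋₊ (n * t)) ^ 2 + (r2 n ⌊α * n⌋₊ (n * t)) ^ 2
            - 2 * (r12 n ⌊α * n⌋₊ (n * t)) ^ 2) /
          ((n : ℝ) ^ ((3 : ℝ) / 2) * t * (r3 n ⌊α * n⌋₊ (n * t)) ^ 2 *
            Real.sqrt ((r1 n ⌊α * n⌋₊ (n * t) + r2 n ⌊α * n⌋₊ (n * t)) ^ 2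
              - 4 * (r12 n ⌊α * n⌋₊ (n * t)) ^ 2)))
      atTop (nhds 0) :=
  weyl_pointwise_scaled_above_general α t hα0 hα1 htα
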